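/- Let 0 < γ < 1 and τ > 0, and set λ = τ^(1-γ) · γ^(-γ) · (1-γ)^(γ-1). For any fixed s ≥ 0 and c > 0, the function θ ↦ θ^(1-1/γ) · c^(1/γ) · s + τθ, defined for θ > 0 (extended appropriately at θ = 0 when s = 0), attains its infimum over θ ≥ 0, and this infimum equals λ · c · s^γ. -/

import Mathlib

/-!
For `a, b > 0` write `a θ^(1-1/γ) + b θ = γ p + (1 - γ) q` with `p = a θ^(1-1/γ) / γ` and
`q = b θ / (1 - γ)`. The exponents are chosen so that `θ` cancels in the weighted geometric mean
`p^γ q^(1-γ) = a^γ b^(1-γ) γ^(-γ) (1-γ)^(γ-1)`, so weighted AM-GM gives a lower bound independent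
of `θ`, attained where `p = q`, i.e. at `θ = (a (1-γ) / (b γ))^γ`. With `a = c^(1/γ) s` and
`b = τ` one has `a^γ = c s^γ`.
-/

open Real

theorem weighted_terms_geom_mean_eq {γ a b θ : ℝ} (hγ0 : 0 < γ) (hγ1 : γ < 1) (ha : 0 < a)
    (hb : 0 < b) (hθ : 0 < θ) :
    (θ ^ (1 - 1 / γ) * a / γ) ^ γ * (b * θ / (1 - γ)) ^ (1 - γ)
      = a ^ γ * b ^ (1 - γ) * γ ^ (-γ) * (1 - γ) ^ (γ - 1) := by
  have h1γ : 0 < 1 - γ := by linarith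
  have hexp : (1 - 1 / γ) * γ = -(1 - γ) := by field_simp; ring
  rw [div_rpow (by positivity) hγ0.le, div_rpow (by positivity) h1γ.le,
    mul_rpow (by positivity) ha.le, mul_rpow hb.le hθ.le, ← rpow_mul hθ.le, hexp,
    rpow_neg hθ.le, rpow_neg hγ0.le, show γ - 1 = -(1 - γ) by ring, rpow_neg h1γ.le]
  have : 0 < θ ^ (1 - γ) := rpow_pos_of_pos hθ _
  field_simp

theorem le_rpow_one_sub_inv_mul_add_mul {γ a b θ : ℝ} (hγ0 : 0 < γ) (hγ1 : γ < 1) (ha : 0 < a)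
    (hb : 0 < b) (hθ : 0 < θ) :
    a ^ γ * b ^ (1 - γ) * γ ^ (-γ) * (1 - γ) ^ (γ - 1) ≤ θ ^ (1 - 1 / γ) * a + b * θ := by
  have h1γ : 0 < 1 - γ := by linarith
  have amgm := geom_mean_le_arith_mean2_weighted hγ0.le h1γ.le
    (p₁ := θ ^ (1 - 1 / γ) * a / γ) (p₂ := b * θ / (1 - γ)) (by positivity) (by positivity)
    (by ring)
  rw [weighted_terms_geom_mean_eq hγ0 hγ1 ha hb hθ] at amgm
  convert amgm using 1
  field_simp

theorem rpow_one_sub_inv_mul_add_mul_eq_of_balanced {γ a b θ : ℝ} (hγ0 : 0 < γ) (hγ1 : γ < 1)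
    (ha : 0 < a) (hb : 0 < b) (hθ : 0 < θ)
    (hbal : θ ^ (1 - 1 / γ) * a / γ = b * θ / (1 - γ)) :
    θ ^ (1 - 1 / γ) * a + b * θ = a ^ γ * b ^ (1 - γ) * γ ^ (-γ) * (1 - γ) ^ (γ - 1) := by
  have h1γ : 0 < 1 - γ := by linarith
  have hq : 0 < b * θ / (1 - γ) := by positivity
  rw [← weighted_terms_geom_mean_eq hγ0 hγ1 ha hb hθ, hbal, ← rpow_add hq, add_sub_cancel,
    rpow_one]
  calc θ ^ (1 - 1 / γ) * a + b * θ
      = γ * (θ ^ (1 - 1 / γ) * a / γ) + (1 - γ) * (b * θ / (1 - γ)) := by field_simp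
    _ = b * θ / (1 - γ) := by rw [hbal]; ring

theorem weighted_terms_eq_at_critical_point {γ a b : ℝ} (hγ0 : 0 < γ) (hγ1 : γ < 1)
    (ha : 0 < a) (hb : 0 < b) :
    ((a * (1 - γ) / (b * γ)) ^ γ) ^ (1 - 1 / γ) * a / γ
      = b * (a * (1 - γ) / (b * γ)) ^ γ / (1 - γ) := by
  have h1γ : 0 < 1 - γ := by linarith
  have hB : 0 < a * (1 - γ) / (b * γ) := by positivity
  rw [← rpow_mul hB.le, show γ * (1 - 1 / γ) = γ - 1 by field_simp, rpow_sub_one hB.ne']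
  field_simp

theorem isLeast_rpow_one_sub_inv_mul_add_mul {γ a b : ℝ} (hγ0 : 0 < γ) (hγ1 : γ < 1)
    (ha : 0 < a) (hb : 0 < b) :
    IsLeast {x : ℝ | ∃ θ : ℝ, 0 < θ ∧ x = θ ^ (1 - 1 / γ) * a + b * θ}
      (a ^ γ * b ^ (1 - γ) * γ ^ (-γ) * (1 - γ) ^ (γ - 1)) := by
  have h1γ : 0 < 1 - γ := by linarith
  refine ⟨⟨_, by positivity, (rpow_one_sub_inv_mul_add_mul_eq_of_balanced hγ0 hγ1 ha hb
    (by positivity) (weighted_terms_eq_at_critical_point hγ0 hγ1 ha hb)).symm⟩, ?_⟩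
  rintro x ⟨θ, hθ, rfl⟩
  exact le_rpow_one_sub_inv_mul_add_mul hγ0 hγ1 ha hb hθ

/-- The variational identity underlying the group-bridge reformulation:
for `0 < γ < 1`, `τ > 0` and `λ = τ^(1-γ) γ^(-γ) (1-γ)^(γ-1)`, the function
`θ ↦ θ^(1-1/γ) c^(1/γ) s + τ θ` on `θ > 0` (extended by value `0` at `θ = 0`
when `s = 0`) attains its infimum over `θ ≥ 0`, and this infimum equals `λ c s^γ`. -/
theorem stmt_0 (γ τ c s : ℝ) (hγ0 : 0 < γ) (hγ1 : γ < 1) (hτ : 0 < τ)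
    (hc : 0 < c) (hs : 0 ≤ s)
    (lam : ℝ) (hlam : lam = τ ^ (1 - γ) * γ ^ (-γ) * (1 - γ) ^ (γ - 1)) :
    IsLeast
      {x : ℝ | (∃ θ : ℝ, 0 < θ ∧ x = θ ^ (1 - 1 / γ) * c ^ (1 / γ) * s + τ * θ) ∨
        (s = 0 ∧ x = 0)}
      (lam * c * s ^ γ) := by
  subst hlam
  rcases hs.eq_or_lt with rfl | hs
  · rw [zero_rpow hγ0.ne', mul_zero]
    refine ⟨Or.inr ⟨rfl, rfl⟩, ?_⟩
    rintro x (⟨θ, hθ, rfl⟩ | ⟨-, rfl⟩)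
    · rw [mul_zero, zero_add]
      positivity
    · rfl
  · have hpow : (c ^ (1 / γ) * s) ^ γ = c * s ^ γ := by
      rw [mul_rpow (by positivity) hs.le, ← rpow_mul hc.le, one_div_mul_cancel hγ0.ne', rpow_one]
    have key := isLeast_rpow_one_sub_inv_mul_add_mul hγ0 hγ1
      (by positivity : 0 < c ^ (1 / γ) * s) hτ
    rw [hpow] at key
    convert key using 1
    · ext x
      simp only [Set.mem_ofPred_eq, hs.ne', false_and, or_false, mul_assoc]
    · ring
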